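/- Let N be a nonempty nested set of C_m such that the union ⋃_{I ∈ N} I is connected in C_m. Then every non-identity element of the stabilizer (D_m)_N is a reflection; in particular (D_m)_N has order at most 2. -/

import Mathlib

/-
The maximal members of a nested set are pairwise disjoint, so by (N3) a connected union forces a
unique maximal member, which is then `⋃₀ N` itself; every element of the stabilizer fixes it
setwise. A nonempty proper connected subset `I` of the cycle has exactly one point `a` with
`a ∈ I` and `a - 1 ∉ I`, so a rotation `x ↦ x + c` fixing `I` has `c = 0`. Every element of `D_m`
is `x ↦ x + c` or `x ↦ c - x`, hence the quotient of two reflections is a rotation; as the only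
rotation in the stabilizer is the identity, it contains at most one reflection.
-/

open Pointwise

def cycleGraph (m : ℕ) : SimpleGraph (ZMod m) where
  Adj i j := i ≠ j ∧ (j = i + 1 ∨ i = j + 1)
  symm := ⟨fun i j h => ⟨h.1.symm, h.2.symm⟩⟩
  loopless := ⟨fun i h => h.1 rfl⟩

def IsConnSubset (m : ℕ) (I : Set (ZMod m)) : Prop :=
  ((cycleGraph m).induce I).Connected

def IsNested (m : ℕ) (N : Set (Set (ZMod m))) : Prop :=
  N.Finite ∧
  (∀ I ∈ N, I.Nonempty ∧ I ≠ Set.univ ∧ IsConnSubset m I) ∧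
  (∀ I ∈ N, ∀ J ∈ N, I ⊆ J ∨ J ⊆ I ∨ I ∩ J = ∅) ∧
  (∀ S : Finset (Set (ZMod m)), ↑S ⊆ N → 2 ≤ S.card →
    ((S : Set (Set (ZMod m))).Pairwise fun I J => I ∩ J = ∅) →
    ¬ IsConnSubset m (⋃ I ∈ S, I))

def rot (m : ℕ) : Equiv.Perm (ZMod m) := Equiv.addRight 1

def cycRefl (m : ℕ) : Equiv.Perm (ZMod m) := Equiv.neg (ZMod m)

def dihedral (m : ℕ) : Subgroup (Equiv.Perm (ZMod m)) :=
  Subgroup.closure {rot m, cycRefl m}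

def IsReflection (m : ℕ) (φ : Equiv.Perm (ZMod m)) : Prop :=
  φ ∈ dihedral m ∧ φ ∉ Subgroup.zpowers (rot m)

def nestedStab (m : ℕ) (N : Set (Set (ZMod m))) : Subgroup (Equiv.Perm (ZMod m)) :=
  dihedral m ⊓ MulAction.stabilizer (Equiv.Perm (ZMod m)) N

def rotStab (m : ℕ) (N : Set (Set (ZMod m))) : Subgroup (Equiv.Perm (ZMod m)) :=
  Subgroup.zpowers (rot m) ⊓ nestedStab m N

noncomputable def alphaNum (m d k : ℕ) : ℕ :=
  {N : Set (Set (ZMod m)) | IsNested m N ∧ N.ncard = k ∧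
    Nat.card (rotStab m N) = d ∧ ¬ ∃ φ ∈ nestedStab m N, IsReflection m φ}.ncard

noncomputable def betaNum (m d k : ℕ) : ℕ :=
  {N : Set (Set (ZMod m)) | IsNested m N ∧ N.ncard = k ∧
    Nat.card (rotStab m N) = d ∧ ∃ φ ∈ nestedStab m N, IsReflection m φ}.ncard

noncomputable def gammaNum (m d k : ℕ) : ℕ := alphaNum m d k + betaNum m d k

lemma Set.Finite.sUnion_setOf_maximal {α : Type*} {N : Set (Set α)} (hN : N.Finite) :
    ⋃₀ {K | Maximal (· ∈ N) K} = ⋃₀ N := by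
  refine subset_antisymm (Set.sUnion_mono fun K hK => hK.prop) ?_
  rintro x ⟨I, hI, hx⟩
  obtain ⟨K, hIK, hK⟩ := hN.exists_le_maximal hI
  exact ⟨K, hK, hIK hx⟩

lemma Set.smul_sUnion_eq_of_smul_eq {G α : Type*} [SMul G α] {g : G} {N : Set (Set α)}
    (h : g • N = N) : g • ⋃₀ N = ⋃₀ N := by
  rw [Set.smul_set_sUnion, ← Set.sUnion_image]
  change ⋃₀ ((g • ·) '' N) = _
  rw [Set.image_smul, h]

lemma Subgroup.card_le_two_of_inf_eq_bot {G : Type*} [Group G] {R H : Subgroup G}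
    (hRH : R ⊓ H = ⊥) (hH : ∀ φ ∈ H, ∀ ψ ∈ H, φ ∉ R → ψ ∉ R → φ * ψ⁻¹ ∈ R) :
    Nat.card H ≤ 2 := by
  have hR : ∀ φ ∈ H, φ ∈ R → φ = 1 := fun φ hφ hφR => Subgroup.mem_bot.mp (hRH ▸ ⟨hφR, hφ⟩)
  have hinj : Function.Injective fun φ : H => (φ : G) ∈ R := by
    rintro ⟨φ, hφ⟩ ⟨ψ, hψ⟩ (h : (φ ∈ R) = (ψ ∈ R))
    ext
    change φ = ψ
    by_cases hφR : φ ∈ R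
    · rw [hR φ hφ hφR, hR ψ hψ (h ▸ hφR)]
    · exact mul_inv_eq_one.mp (hR _ (H.mul_mem hφ (H.inv_mem hψ)) (hH φ hφ ψ hψ hφR (h ▸ hφR)))
  simpa using Nat.card_le_card_of_injective _ hinj

section CycleGraph

variable {m : ℕ}

lemma mem_zpowers_rot_iff {φ : Equiv.Perm (ZMod m)} :
    φ ∈ Subgroup.zpowers (rot m) ↔ ∃ c : ZMod m, φ = Equiv.addRight c := by
  simp only [Subgroup.mem_zpowers_iff, rot, Equiv.zsmul_addRight, zsmul_one]
  constructor
  · rintro ⟨k, rfl⟩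
    exact ⟨k, rfl⟩
  · rintro ⟨c, rfl⟩
    exact ⟨ZMod.cast c, by rw [ZMod.intCast_zmod_cast]⟩

lemma exists_eq_add_or_eq_sub_of_mem_dihedral {φ : Equiv.Perm (ZMod m)}
    (hφ : φ ∈ dihedral m) : ∃ c : ZMod m, (∀ x, φ x = x + c) ∨ ∀ x, φ x = c - x := by
  induction hφ using Subgroup.closure_induction with
  | mem ψ hψ =>
    rcases hψ with rfl | rfl
    · exact ⟨1, Or.inl fun x => rfl⟩
    · exact ⟨0, Or.inr fun x => (zero_sub x).symm⟩
  | one => exact ⟨0, Or.inl fun x => (add_zero x).symm⟩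
  | mul φ ψ _ _ ihφ ihψ =>
    obtain ⟨c, hc | hc⟩ := ihφ <;> obtain ⟨d, hd | hd⟩ := ihψ
    · exact ⟨d + c, Or.inl fun x => by rw [Equiv.Perm.mul_apply, hc, hd, add_assoc]⟩
    · exact ⟨d + c, Or.inr fun x => by rw [Equiv.Perm.mul_apply, hc, hd]; ring⟩
    · exact ⟨c - d, Or.inr fun x => by rw [Equiv.Perm.mul_apply, hc, hd]; ring⟩
    · exact ⟨c - d, Or.inl fun x => by rw [Equiv.Perm.mul_apply, hc, hd]; ring⟩
  | inv φ _ ih =>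
    obtain ⟨c, hc | hc⟩ := ih
    · exact ⟨-c, Or.inl fun x => by rw [Equiv.Perm.inv_eq_iff_eq, hc]; ring⟩
    · exact ⟨c, Or.inr fun x => by rw [Equiv.Perm.inv_eq_iff_eq, hc]; ring⟩

lemma mul_inv_mem_zpowers_rot {φ ψ : Equiv.Perm (ZMod m)} (hφ : φ ∈ dihedral m)
    (hψ : ψ ∈ dihedral m) (hφR : φ ∉ Subgroup.zpowers (rot m))
    (hψR : ψ ∉ Subgroup.zpowers (rot m)) : φ * ψ⁻¹ ∈ Subgroup.zpowers (rot m) := by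
  obtain ⟨c, hc | hc⟩ := exists_eq_add_or_eq_sub_of_mem_dihedral hφ
  · exact absurd (mem_zpowers_rot_iff.mpr ⟨c, Equiv.ext hc⟩) hφR
  obtain ⟨d, hd | hd⟩ := exists_eq_add_or_eq_sub_of_mem_dihedral hψ
  · exact absurd (mem_zpowers_rot_iff.mpr ⟨d, Equiv.ext hd⟩) hψR
  refine mem_zpowers_rot_iff.mpr ⟨c - d, Equiv.ext fun x => ?_⟩
  have hx : x = d - ψ⁻¹ x := by rw [← hd]; exact Equiv.Perm.inv_eq_iff_eq.mp rfl
  rw [Equiv.Perm.mul_apply, hc, Equiv.coe_addRight]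
  linear_combination -hx

lemma exists_mem_sub_one_notMem [NeZero m] {U : Set (ZMod m)} (hne : U.Nonempty)
    (hU : U ≠ Set.univ) : ∃ a ∈ U, a - 1 ∉ U := by
  by_contra! h
  obtain ⟨y, hy⟩ := hne
  have hsub : ∀ n : ℕ, y - n ∈ U := by
    intro n
    induction n with
    | zero => simpa using hy
    | succ n ih => simpa [sub_add_eq_sub_sub] using h _ ih
  exact hU (Set.eq_univ_of_forall fun x => by simpa using hsub (y - x).val)

lemma IsConnSubset.induction_on {I : Set (ZMod m)} (hI : IsConnSubset m I)
    {P : ZMod m → Prop} {a b : ZMod m} (ha : a ∈ I) (hb : b ∈ I) (hPa : P a)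
    (hstep : ∀ x ∈ I, ∀ y ∈ I, (cycleGraph m).Adj x y → P x → P y) : P b := by
  obtain ⟨w⟩ := hI.preconnected ⟨a, ha⟩ ⟨b, hb⟩
  suffices ∀ (u v : I), ((cycleGraph m).induce I).Walk u v → P u → P v from this _ _ w hPa
  intro u v w
  induction w with
  | nil => exact id
  | cons h _ ih => exact fun hu => ih (hstep _ (Subtype.prop _) _ (Subtype.prop _) h hu)

lemma IsConnSubset.eq_of_sub_one_notMem {I : Set (ZMod m)} (hI : IsConnSubset m I)
    {a b : ZMod m} (ha : a ∈ I) (ha' : a - 1 ∉ I) (hb : b ∈ I) (hb' : b - 1 ∉ I) :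
    a = b := by
  -- A walk inside `I` that starts at `a` never leaves the arc `a, a + 1, …` lying in `I`.
  obtain ⟨n, rfl, hn⟩ : ∃ n : ℕ, b = a + n ∧ ∀ i < n, a + i ∈ I := by
    refine hI.induction_on (P := fun x => ∃ n : ℕ, x = a + n ∧ ∀ i < n, a + i ∈ I) ha hb
      ⟨0, by simp, fun i hi => absurd hi i.not_lt_zero⟩ ?_
    rintro x hx y hy ⟨-, rfl | hxy⟩ ⟨n, rfl, hn⟩
    · refine ⟨n + 1, by push_cast; ring, fun i hi => ?_⟩
      rcases Nat.lt_succ_iff_lt_or_eq.mp hi with hi | rfl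
      exacts [hn i hi, hx]
    · rcases n with _ | k
      · have hya : y = a - 1 := by
          simp only [Nat.cast_zero, add_zero] at hxy
          linear_combination -hxy
        exact absurd (hya ▸ hy) ha'
      · refine ⟨k, ?_, fun i hi => hn i (by omega)⟩
        push_cast at hxy
        linear_combination -hxy
  rcases n with _ | k
  · simp
  · refine absurd ?_ hb'
    convert hn k k.lt_succ_self using 1
    push_cast
    ring

lemma IsConnSubset.eq_zero_of_forall_add_mem_iff [NeZero m] {U : Set (ZMod m)}
    (hU : IsConnSubset m U) (hne : U.Nonempty) (hproper : U ≠ Set.univ) {c : ZMod m}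
    (hc : ∀ x, x + c ∈ U ↔ x ∈ U) : c = 0 := by
  obtain ⟨a, ha, ha'⟩ := exists_mem_sub_one_notMem hne hproper
  have h : a + c - 1 ∉ U := by rwa [show a + c - 1 = a - 1 + c by ring, hc]
  have := hU.eq_of_sub_one_notMem ha ha' ((hc a).mpr ha) h
  linear_combination -this

lemma IsConnSubset.eq_one_of_mem_zpowers_rot [NeZero m] {U : Set (ZMod m)}
    (hU : IsConnSubset m U) (hne : U.Nonempty) (hproper : U ≠ Set.univ)
    {φ : Equiv.Perm (ZMod m)} (hφ : φ ∈ Subgroup.zpowers (rot m)) (hφU : φ • U = U) :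
    φ = 1 := by
  obtain ⟨c, rfl⟩ := mem_zpowers_rot_iff.mp hφ
  suffices c = 0 by rw [this, Equiv.addRight_zero]
  refine hU.eq_zero_of_forall_add_mem_iff hne hproper fun x => ?_
  conv_rhs => rw [← Set.smul_mem_smul_set_iff (a := Equiv.addRight c), hφU]
  rfl

lemma IsNested.maximal_pairwise_inter_eq_empty {N : Set (Set (ZMod m))} (hN : IsNested m N) :
    {K | Maximal (· ∈ N) K}.Pairwise fun I J => I ∩ J = ∅ := by
  intro I hI J hJ hIJ
  rcases hN.2.2.1 I hI.prop J hJ.prop with h | h | h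
  · exact absurd (hI.eq_of_le hJ.prop h) hIJ
  · exact absurd (hJ.eq_of_le hI.prop h).symm hIJ
  · exact h

lemma IsNested.sUnion_mem {N : Set (Set (ZMod m))} (hN : IsNested m N) (hne : N.Nonempty)
    (hconn : IsConnSubset m (⋃₀ N)) : ⋃₀ N ∈ N := by
  have hfin : {K | Maximal (· ∈ N) K}.Finite := hN.1.subset fun K hK => hK.prop
  set S := hfin.toFinset
  have hS : ⋃ K ∈ S, K = ⋃₀ N := by
    rw [← hN.1.sUnion_setOf_maximal, Set.sUnion_eq_biUnion, ← Finset.set_biUnion_coe,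
      hfin.coe_toFinset]
  have hcard : S.card ≤ 1 := by
    by_contra! h
    exact hN.2.2.2 S (fun K hK => (hfin.mem_toFinset.mp hK).prop) h
      (by simpa [S] using hN.maximal_pairwise_inter_eq_empty) (hS ▸ hconn)
  obtain ⟨I, hI⟩ := hne
  obtain ⟨K, -, hK⟩ := hN.1.exists_le_maximal hI
  have hKS : K ∈ S := hfin.mem_toFinset.mpr hK
  have hSK : S = {K} := Finset.eq_singleton_iff_unique_mem.mpr
    ⟨hKS, fun L hL => Finset.card_le_one.mp hcard L hL K hKS⟩
  rw [← hS, hSK, Finset.set_biUnion_singleton]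
  exact hK.prop

lemma rotStab_eq_bot [NeZero m] {N : Set (Set (ZMod m))} (hN : IsNested m N)
    (hne : N.Nonempty) (hconn : IsConnSubset m (⋃₀ N)) : rotStab m N = ⊥ := by
  obtain ⟨hUne, hUtop, hUconn⟩ := hN.2.1 _ (hN.sUnion_mem hne hconn)
  refine (Subgroup.eq_bot_iff_forall _).mpr fun φ ⟨hφR, hφ⟩ => ?_
  exact hUconn.eq_one_of_mem_zpowers_rot hUne hUtop hφR
    (Set.smul_sUnion_eq_of_smul_eq (MulAction.mem_stabilizer_iff.mp hφ.2))

end CycleGraph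

theorem connected_union_stab_small (m : ℕ) (hm : 3 ≤ m) (N : Set (Set (ZMod m)))
    (hN : IsNested m N) (hne : N.Nonempty)
    (hconn : IsConnSubset m (⋃₀ N)) :
    (∀ φ ∈ nestedStab m N, φ ≠ 1 → IsReflection m φ) ∧
    Nat.card (nestedStab m N) ≤ 2 := by
  have : NeZero m := ⟨by omega⟩
  have hrot : rotStab m N = ⊥ := rotStab_eq_bot hN hne hconn
  refine ⟨fun φ hφ hφ1 => ⟨hφ.1, fun hφR => hφ1 ?_⟩, ?_⟩
  · exact Subgroup.mem_bot.mp (hrot ▸ ⟨hφR, hφ⟩)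
  · exact Subgroup.card_le_two_of_inf_eq_bot hrot fun φ hφ ψ hψ =>
      mul_inv_mem_zpowers_rot hφ.1 hψ.1
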